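/- arXiv:1901.00682 — 6 statements merged into one kernel-verified Lean document; each statement's English description precedes it below -/
import Mathlib

section
/- Let M, N ≥ 1, let X = Matrix (Fin M) (Fin N) ℝ with the Frobenius inner product ⟨u, v⟩ = Σ_{i,j} u_{ij} v_{ij}, and let D : X → X × X be the forward finite difference operator: (Du)¹_{ij} = u_{i+1,j} − u_{ij} for i < M and (Du)¹_{ij} = 0 in the last row; (Du)²_{ij} = u_{i,j+1} − u_{ij} for j < N and (Du)²_{ij} = 0 in the last column. Let F : X → (−∞, +∞] be proper and convex and let α > 0. Suppose u* ∈ X and p* = (p*¹, p*²) ∈ X × X satisfy: (i) |p*¹_{ij}| ≤ 1 and |p*²_{ij}| ≤ 1 for all i, j; (ii) for every v ∈ X, α F(v) ≥ α F(u*) − ⟨p*, D(v − u*)⟩ (i.e., −D^* p*/α is a subgradient of F at u*); and (iii) ⟨Du*, p*⟩ = Σ_{i,j} (|(Du*)¹_{ij}| + |(Du*)²_{ij}|). Then u* minimizes J(u) = α F(u) + Σ_{i,j} (|(Du)¹_{ij}| + |(Du)²_{ij}|) over X. -/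
open Finset

/-- Forward finite difference in the first (row) direction, zero in the last row. -/
noncomputable def fdiff1 {M N : ℕ} (u : Matrix (Fin M) (Fin N) ℝ) : Matrix (Fin M) (Fin N) ℝ :=
  fun i j => if h : (i : ℕ) + 1 < M then u ⟨(i : ℕ) + 1, h⟩ j - u i j else 0

/-- Forward finite difference in the second (column) direction, zero in the last column. -/
noncomputable def fdiff2 {M N : ℕ} (u : Matrix (Fin M) (Fin N) ℝ) : Matrix (Fin M) (Fin N) ℝ :=
  fun i j => if h : (j : ℕ) + 1 < N then u i ⟨(j : ℕ) + 1, h⟩ - u i j else 0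

/-- Anisotropic discrete total variation `‖|Du|‖₁ = Σ_{i,j} (|(Du)¹_{ij}| + |(Du)²_{ij}|)`. -/
noncomputable def anisoTV {M N : ℕ} (u : Matrix (Fin M) (Fin N) ℝ) : ℝ :=
  ∑ i, ∑ j, (|fdiff1 u i j| + |fdiff2 u i j|)

/-
Writing `ℓ(w) = ⟨p*, Dw⟩`, the subgradient inequality reads `α F(v) ≥ α F(u*) - ℓ(v) + ℓ(u*)`.
Since `|p*| ≤ 1` entrywise, `ℓ(v) ≤ ‖|Dv|‖₁`, while `ℓ(u*) = ‖|Du*|‖₁` by alignment; adding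
`‖|Dv|‖₁` to both sides gives `α F(v) + ‖|Dv|‖₁ ≥ α F(u*) + ‖|Du*|‖₁`. Everything is in `EReal`, but
`ℓ` and the total variations are real, so the rearrangement is valid even at `±∞`.
-/

theorem EReal.add_le_add_of_sub_le {a b : EReal} {r s t : ℝ} (h : a - r ≤ b) (hrst : r + s ≤ t) :
    a + s ≤ b + t := by
  have hab : a ≤ b + r :=
    (EReal.sub_le_iff_le_add (.inl (EReal.coe_ne_bot r)) (.inl (EReal.coe_ne_top r))).1 h
  calc a + s ≤ b + r + s := add_le_add_left hab _
    _ = b + ((r + s : ℝ) : EReal) := by rw [add_assoc, EReal.coe_add]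
    _ ≤ b + t := add_le_add_right (EReal.coe_le_coe_iff.2 hrst) _

theorem mul_le_abs_of_abs_le_one {R : Type*} [Ring R] [LinearOrder R] [IsOrderedRing R]
    {p x : R} (hp : |p| ≤ 1) : p * x ≤ |x| :=
  calc p * x ≤ |p| * |x| := abs_mul p x ▸ le_abs_self _
    _ ≤ |x| := mul_le_of_le_one_left (abs_nonneg x) hp

section FiniteDifferences

variable {M N : ℕ}

theorem fdiff1_sub (u v : Matrix (Fin M) (Fin N) ℝ) : fdiff1 (u - v) = fdiff1 u - fdiff1 v := by
  ext i j
  simp only [fdiff1, Matrix.sub_apply]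
  split_ifs <;> ring

theorem fdiff2_sub (u v : Matrix (Fin M) (Fin N) ℝ) : fdiff2 (u - v) = fdiff2 u - fdiff2 v := by
  ext i j
  simp only [fdiff2, Matrix.sub_apply]
  split_ifs <;> ring

/-- The pairing `⟨p, Dw⟩` of a dual variable `p = (p¹, p²)` with the discrete gradient of `w`. -/
noncomputable def gradPairing (p1 p2 w : Matrix (Fin M) (Fin N) ℝ) : ℝ :=
  ∑ i, ∑ j, (p1 i j * fdiff1 w i j + p2 i j * fdiff2 w i j)

theorem gradPairing_sub (p1 p2 u v : Matrix (Fin M) (Fin N) ℝ) :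
    gradPairing p1 p2 (u - v) = gradPairing p1 p2 u - gradPairing p1 p2 v := by
  simp only [gradPairing, fdiff1_sub, fdiff2_sub, Matrix.sub_apply, ← sum_sub_distrib]
  congr! 2
  ring

theorem gradPairing_le_anisoTV {p1 p2 : Matrix (Fin M) (Fin N) ℝ}
    (hp : ∀ i j, |p1 i j| ≤ 1 ∧ |p2 i j| ≤ 1) (w : Matrix (Fin M) (Fin N) ℝ) :
    gradPairing p1 p2 w ≤ anisoTV w :=
  sum_le_sum fun i _ => sum_le_sum fun j _ =>
    add_le_add (mul_le_abs_of_abs_le_one (hp i j).1) (mul_le_abs_of_abs_le_one (hp i j).2)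

end FiniteDifferences

theorem primal_dual_relation_gives_minimizer_general (M N : ℕ)
    (F : Matrix (Fin M) (Fin N) ℝ → EReal)
    (α : ℝ)
    (ustar p1 p2 : Matrix (Fin M) (Fin N) ℝ)
    (hp : ∀ i j, |p1 i j| ≤ 1 ∧ |p2 i j| ≤ 1)
    (hsubgrad : ∀ v : Matrix (Fin M) (Fin N) ℝ,
      (α : EReal) * F v ≥ (α : EReal) * F ustar -
        ((∑ i, ∑ j, (p1 i j * fdiff1 (v - ustar) i j + p2 i j * fdiff2 (v - ustar) i j) : ℝ) : EReal))
    (halign : (∑ i, ∑ j, (fdiff1 ustar i j * p1 i j + fdiff2 ustar i j * p2 i j)) = anisoTV ustar) :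
    ∀ v : Matrix (Fin M) (Fin N) ℝ,
      (α : EReal) * F ustar + ((anisoTV ustar : ℝ) : EReal) ≤
        (α : EReal) * F v + ((anisoTV v : ℝ) : EReal) := by
  have hpair : gradPairing p1 p2 ustar = anisoTV ustar := by
    simpa only [gradPairing, mul_comm] using halign
  intro v
  refine EReal.add_le_add_of_sub_le (r := gradPairing p1 p2 (v - ustar)) (hsubgrad v) ?_
  rw [gradPairing_sub, hpair]
  linarith [gradPairing_le_anisoTV hp v]

/-- if `(u*, p*)` satisfies the primal-dual optimality relations for the
finite difference discretization, then `u*` minimizes `J(u) = αF(u) + ‖|Du|‖₁`. -/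
theorem primal_dual_relation_gives_minimizer (M N : ℕ) (hM : 1 ≤ M) (hN : 1 ≤ N)
    (F : Matrix (Fin M) (Fin N) ℝ → EReal)
    (hFbot : ∀ u, F u ≠ ⊥) (hFproper : ∃ u, F u ≠ ⊤)
    (hFconvex : ∀ u v : Matrix (Fin M) (Fin N) ℝ, ∀ t : ℝ, 0 ≤ t → t ≤ 1 →
      F (t • u + (1 - t) • v) ≤ (t : EReal) * F u + ((1 - t : ℝ) : EReal) * F v)
    (α : ℝ) (hα : 0 < α)
    (ustar p1 p2 : Matrix (Fin M) (Fin N) ℝ)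
    (hp : ∀ i j, |p1 i j| ≤ 1 ∧ |p2 i j| ≤ 1)
    (hsubgrad : ∀ v : Matrix (Fin M) (Fin N) ℝ,
      (α : EReal) * F v ≥ (α : EReal) * F ustar -
        ((∑ i, ∑ j, (p1 i j * fdiff1 (v - ustar) i j + p2 i j * fdiff2 (v - ustar) i j) : ℝ) : EReal))
    (halign : (∑ i, ∑ j, (fdiff1 ustar i j * p1 i j + fdiff2 ustar i j * p2 i j)) = anisoTV ustar) :
    ∀ v : Matrix (Fin M) (Fin N) ℝ,
      (α : EReal) * F ustar + ((anisoTV ustar : ℝ) : EReal) ≤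
        (α : EReal) * F v + ((anisoTV v : ℝ) : EReal) :=
  primal_dual_relation_gives_minimizer_general M N F α ustar p1 p2 hp hsubgrad halign
end

section
/- Let ι be a finite index type and for each s ∈ ι let X_s be a finite-dimensional real inner product space; let X = Π_{s ∈ ι} X_s with inner product ⟨u, v⟩ = Σ_s ⟨u_s, v_s⟩. For each s let F_s : X_s → EReal never take the value −∞ and be finite at some point, and define F : X → EReal by F(u) = Σ_s F_s(u_s). Then for every u* ∈ X the Legendre–Fenchel conjugate F*(u*) := ⨆_{u ∈ X} (⟨u, u*⟩ − F(u)) satisfies F*(u*) = Σ_s F_s*(u*_s), where F_s*(w) := ⨆_{v ∈ X_s} (⟨v, w⟩ − F_s(v)). -/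
/-! Since `⟨u, u*⟩` is real and no `F_s` takes the value `⊥`, the objective
`⟨u, u*⟩ - F u` splits as `∑ s, (⟨u_s, u*_s⟩ - F_s u_s)`, a sum of functions of separate
coordinates. The supremum over a product of such a sum is the sum of the suprema; in `EReal`
this needs no finiteness, because `⊥` absorbs `⊤` in addition. -/

namespace EReal

variable {ι : Type*}

lemma finsetSum_ne_bot {s : Finset ι} {f : ι → EReal} (h : ∀ i ∈ s, f i ≠ ⊥) :
    ∑ i ∈ s, f i ≠ ⊥ :=
  WithBot.sum_eq_bot_iff.not.2 fun ⟨i, hi, hbot⟩ ↦ h i hi hbot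

lemma coe_finsetSum_sub (s : Finset ι) (a : ι → ℝ) {b : ι → EReal} (hb : ∀ i ∈ s, b i ≠ ⊥) :
    ((∑ i ∈ s, a i : ℝ) : EReal) - ∑ i ∈ s, b i = ∑ i ∈ s, ((a i : EReal) - b i) := by
  classical
  induction s using Finset.induction with
  | empty => simp
  | insert j s hj ih =>
    have hbj : b j ≠ ⊥ := hb j (Finset.mem_insert_self j s)
    have hbs : ∀ i ∈ s, b i ≠ ⊥ := fun i hi ↦ hb i (Finset.mem_insert_of_mem hi)
    rw [Finset.sum_insert hj, Finset.sum_insert hj, Finset.sum_insert hj, ← ih hbs, coe_add,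
      sub_eq_add_neg, neg_add (.inl hbj) (.inr (finsetSum_ne_bot hbs))]
    simp only [sub_eq_add_neg]
    exact add_add_add_comm _ _ _ _

lemma iSup_add_iSup {α β : Type*} (f : α → EReal) (g : β → EReal) :
    (⨆ a, f a) + ⨆ b, g b = ⨆ p : α × β, f p.1 + g p.2 := by
  refine le_antisymm (add_le_of_forall_lt fun x hx y hy ↦ ?_)
    (iSup_le fun p ↦ add_le_add (le_iSup f p.1) (le_iSup g p.2))
  obtain ⟨a, ha⟩ := lt_iSup_iff.1 hx
  obtain ⟨b, hb⟩ := lt_iSup_iff.1 hy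
  exact (add_le_add ha.le hb.le).trans (le_iSup (fun p : α × β ↦ f p.1 + g p.2) (a, b))

lemma finsetSum_iSup_pi {X : ι → Type*} [∀ i, Nonempty (X i)] (f : ∀ i, X i → EReal)
    (s : Finset ι) : ∑ i ∈ s, ⨆ x, f i x = ⨆ u : ∀ i, X i, ∑ i ∈ s, f i (u i) := by
  classical
  induction s using Finset.induction with
  | empty => simp
  | insert j s hj ih =>
    simp only [Finset.sum_insert hj, ih, iSup_add_iSup]
    refine le_antisymm (iSup_le fun p ↦ ?_) (iSup_le fun u ↦ ?_)
    · have hupdate : ∀ i ∈ s, Function.update p.2 j p.1 i = p.2 i := fun i hi ↦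
        Function.update_of_ne (ne_of_mem_of_not_mem hi hj) _ _
      refine le_of_eq_of_le ?_ (le_iSup _ (Function.update p.2 j p.1))
      rw [Function.update_self, Finset.sum_congr rfl fun i hi ↦ congrArg (f i) (hupdate i hi)]
    · exact le_iSup (fun p : X j × (∀ i, X i) ↦ f j p.1 + ∑ i ∈ s, f i (p.2 i)) (u j, u)

end EReal

theorem conjugate_of_separable_is_separable_general {ι : Type*} [Fintype ι] (X : ι → Type*)
    [∀ s, NormedAddCommGroup (X s)] [∀ s, InnerProductSpace ℝ (X s)]
    (F : ∀ s, X s → EReal)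
    (hbot : ∀ s v, F s v ≠ ⊥)
    (ustar : ∀ s, X s) :
    (⨆ u : ∀ s, X s,
        (((∑ s, inner ℝ (u s) (ustar s) : ℝ) : EReal) - ∑ s, F s (u s))) =
      ∑ s, ⨆ v : X s, (((inner ℝ v (ustar s) : ℝ) : EReal) - F s v) := by
  simp only [EReal.coe_finsetSum_sub _ _ fun s _ ↦ hbot s _]
  exact (EReal.finsetSum_iSup_pi
    (fun s v ↦ ((inner ℝ v (ustar s) : ℝ) : EReal) - F s v) Finset.univ).symm

/-- the Legendre–Fenchel conjugate of a separable functional is separable: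
if `F(u) = Σ_s F_s(u_s)` on `X = Π_s X_s` (with inner product `⟨u,v⟩ = Σ_s ⟨u_s, v_s⟩`),
then `F*(u*) = Σ_s F_s*(u*_s)`. -/
theorem conjugate_of_separable_is_separable {ι : Type*} [Fintype ι] (X : ι → Type*)
    [∀ s, NormedAddCommGroup (X s)] [∀ s, InnerProductSpace ℝ (X s)]
    [∀ s, FiniteDimensional ℝ (X s)]
    (F : ∀ s, X s → EReal)
    (hbot : ∀ s v, F s v ≠ ⊥) (hproper : ∀ s, ∃ v, F s v ≠ ⊤)
    (ustar : ∀ s, X s) :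
    (⨆ u : ∀ s, X s,
        (((∑ s, inner ℝ (u s) (ustar s) : ℝ) : EReal) - ∑ s, F s (u s))) =
      ∑ s, ⨆ v : X s, (((inner ℝ v (ustar s) : ℝ) : EReal) - F s v) :=
  conjugate_of_separable_is_separable_general X F hbot ustar
end

section
/- Let Ỹ and Λ be finite-dimensional real inner product spaces, B : Ỹ → Λ a continuous linear map, C ⊆ Ỹ a nonempty closed convex set, and H : Ỹ → ℝ a convex continuous function. Let τ, σ > 0 satisfy τ σ ‖B‖² < 1, where ‖B‖ is the operator norm. Define the Lagrangian L(p, λ) = H(p) + ⟨B p, λ⟩ for p ∈ C and λ ∈ Λ. Let p₋₁ = p₀ ∈ C and λ₀ ∈ Λ, and for each n ≥ 0 set λ_{n+1} = λ_n + σ B(2 p_n − p_{n−1}) and let p_{n+1} be a minimizer over C of q ↦ H(q) + (1/(2τ)) ‖q − (p_n − τ B^* λ_{n+1})‖². Then for every n ≥ 1, every p ∈ C, and every λ ∈ Λ, the ergodic averages p̄_n = (1/n) Σ_{i=1}^n p_i (which lies in C) and λ̄_n = (1/n) Σ_{i=1}^n λ_i satisfy L(p̄_n, λ) − L(p, λ̄_n)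 ≤ (1/n) ( (1/τ) ‖p − p₀‖² + (1/σ) ‖λ − λ₀‖² ). -/
/-!
Each iteration satisfies `L(p_{i+1}, μ) - L(q, λ_{i+1}) ≤ Ψ_i - Ψ_{i+1}` for the potential
`Ψ_i = ‖q - p_i‖²/(2τ) + ‖μ - λ_i‖²/(2σ) + ‖p_i - p_{i-1}‖²/(2τ) - ⟪B (p_i - p_{i-1}), μ - λ_i⟫`.
The primal update is a proximal step, so strong convexity gives a three-point inequality; the
dual update gives the corresponding three-point identity; and the mismatch between the
extrapolated point `2 p_i - p_{i-1}` and `p_{i+1}` is absorbed by Young's inequality with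
`τ σ ‖B‖² ≤ 1`, which also makes `Ψ` nonnegative. Summing telescopes, and convexity of
`L(·, μ)` together with linearity of `L(q, ·)` pass the bound to the ergodic averages.
-/

open Filter Topology Set
open scoped RealInnerProductSpace

section InnerProductSpace

variable {E : Type*} [NormedAddCommGroup E] [InnerProductSpace ℝ E]

theorem two_mul_inner_sub_sub_eq (x y z : E) :
    2 * ⟪y - x, z - y⟫ = ‖z - x‖ ^ 2 - ‖y - x‖ ^ 2 - ‖z - y‖ ^ 2 := by
  rw [show z - x = (y - x) + (z - y) by abel, norm_add_sq_real]
  ring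

theorem mul_mul_le_of_mul_mul_sq_le_one {τ σ K : ℝ} (hτ : 0 < τ) (hσ : 0 < σ)
    (hK : τ * σ * K ^ 2 ≤ 1) (a b : ℝ) :
    K * a * b ≤ 1 / (2 * τ) * a ^ 2 + 1 / (2 * σ) * b ^ 2 := by
  -- σ a² - 2τσK ab + τ b² = σ (a - τK b)² + τ (1 - τσK²) b²
  have key : 2 * τ * σ * (K * a * b) ≤ σ * a ^ 2 + τ * b ^ 2 := by
    nlinarith [mul_nonneg hσ.le (sq_nonneg (a - τ * K * b)),
      mul_nonneg (mul_nonneg hτ.le (sq_nonneg b)) (sub_nonneg.mpr hK)]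
  field_simp
  linarith

theorem ConvexOn.le_add_inner_of_isMinOn {C : Set E} {f : E → ℝ} (hf : ConvexOn ℝ C f)
    (c : ℝ) {w a q : E} (ha : a ∈ C) (hq : q ∈ C)
    (hmin : IsMinOn (fun y => f y + c * ‖y - w‖ ^ 2) C a) :
    f a ≤ f q + 2 * c * ⟪a - w, q - a⟫ := by
  set I := ⟪a - w, q - a⟫
  set Q := ‖q - a‖ ^ 2
  -- compare `a` with the points of the segment towards `q`, then let them tend to `a`
  have hsegment : ∀ t ∈ Ioo (0 : ℝ) 1, f a ≤ f q + 2 * c * I + t * (c * Q) := by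
    rintro t ⟨ht0, ht1⟩
    set y := (1 - t) • a + t • q
    have hconv : f y ≤ (1 - t) • f a + t • f q := hf.2 ha hq (by linarith) ht0.le (by ring)
    have hle := isMinOn_iff.mp hmin y (hf.1 ha hq (by linarith) ht0.le (by ring))
    have hnorm : ‖y - w‖ ^ 2 = ‖a - w‖ ^ 2 + t * (2 * I) + t ^ 2 * Q := by
      rw [show y - w = (a - w) + t • (q - a) by module, norm_add_sq_real,
        real_inner_smul_right, norm_smul, mul_pow, Real.norm_eq_abs, sq_abs]
      ring
    rw [smul_eq_mul, smul_eq_mul] at hconv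
    rw [hnorm] at hle
    have : 0 ≤ t * (f q + 2 * c * I + t * (c * Q) - f a) := by linarith
    linarith [nonneg_of_mul_nonneg_right this ht0]
  have hlim : Tendsto (fun t : ℝ => f q + 2 * c * I + t * (c * Q)) (𝓝[>] 0)
      (𝓝 (f q + 2 * c * I)) := by
    have : Continuous fun t : ℝ => f q + 2 * c * I + t * (c * Q) := by fun_prop
    simpa using (this.tendsto 0).mono_left nhdsWithin_le_nhds
  refine ge_of_tendsto hlim ?_
  filter_upwards [Ioo_mem_nhdsGT one_pos] with t ht using hsegment t ht

theorem ConvexOn.add_norm_sub_sq_le_of_isMinOn {C : Set E} {f : E → ℝ} (hf : ConvexOn ℝ C f)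
    (c : ℝ) {w a q : E} (ha : a ∈ C) (hq : q ∈ C)
    (hmin : IsMinOn (fun y => f y + c * ‖y - w‖ ^ 2) C a) :
    f a + c * ‖a - w‖ ^ 2 + c * ‖q - a‖ ^ 2 ≤ f q + c * ‖q - w‖ ^ 2 := by
  have hfirst := hf.le_add_inner_of_isMinOn c ha hq hmin
  have hthree := two_mul_inner_sub_sub_eq w a q
  linear_combination hfirst + c * hthree

end InnerProductSpace

section PrimalDual

variable {Y Λ : Type*} [NormedAddCommGroup Y] [InnerProductSpace ℝ Y]
  [NormedAddCommGroup Λ] [InnerProductSpace ℝ Λ]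

theorem inner_apply_le_of_mul_mul_opNorm_sq_le_one (B : Y →L[ℝ] Λ) {τ σ : ℝ} (hτ : 0 < τ)
    (hσ : 0 < σ) (hτσ : τ * σ * ‖B‖ ^ 2 ≤ 1) (x : Y) (l : Λ) :
    ⟪B x, l⟫ ≤ 1 / (2 * τ) * ‖x‖ ^ 2 + 1 / (2 * σ) * ‖l‖ ^ 2 :=
  calc ⟪B x, l⟫ ≤ ‖B‖ * ‖x‖ * ‖l‖ :=
        (real_inner_le_norm _ _).trans (by gcongr; exact B.le_opNorm x)
    _ ≤ _ := mul_mul_le_of_mul_mul_sq_le_one hτ hσ hτσ _ _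

theorem one_div_two_mul_mul_norm_sub_sub_adjoint_sq [CompleteSpace Y] [CompleteSpace Λ]
    (B : Y →L[ℝ] Λ) {τ : ℝ} (hτ : τ ≠ 0) (x y : Y) (l : Λ) :
    1 / (2 * τ) * ‖y - (x - τ • B.adjoint l)‖ ^ 2
      = 1 / (2 * τ) * ‖y - x‖ ^ 2 + ⟪B y, l⟫ - ⟪B x, l⟫ + τ / 2 * ‖B.adjoint l‖ ^ 2 := by
  rw [show y - (x - τ • B.adjoint l) = (y - x) + τ • B.adjoint l by abel, norm_add_sq_real,
    real_inner_smul_right, ContinuousLinearMap.adjoint_inner_right, map_sub, inner_sub_left,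
    norm_smul, mul_pow, Real.norm_eq_abs, sq_abs]
  field_simp
  ring

noncomputable def lagrangian (H : Y → ℝ) (B : Y →L[ℝ] Λ) (x : Y) (l : Λ) : ℝ :=
  H x + ⟪B x, l⟫

noncomputable def chambollePockPotential (B : Y →L[ℝ] Λ) (τ σ : ℝ) (q : Y) (μ : Λ) (x₀ x : Y)
    (l : Λ) : ℝ :=
  1 / (2 * τ) * ‖q - x‖ ^ 2 + 1 / (2 * σ) * ‖μ - l‖ ^ 2 + 1 / (2 * τ) * ‖x - x₀‖ ^ 2
    - ⟪B (x - x₀), μ - l⟫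

theorem chambollePockPotential_nonneg (B : Y →L[ℝ] Λ) {τ σ : ℝ} (hτ : 0 < τ) (hσ : 0 < σ)
    (hτσ : τ * σ * ‖B‖ ^ 2 ≤ 1) (q : Y) (μ : Λ) (x₀ x : Y) (l : Λ) :
    0 ≤ chambollePockPotential B τ σ q μ x₀ x l := by
  have := inner_apply_le_of_mul_mul_opNorm_sq_le_one B hτ hσ hτσ (x - x₀) (μ - l)
  unfold chambollePockPotential
  nlinarith [sq_nonneg ‖q - x‖, one_div_pos.mpr (mul_pos two_pos hτ)]

theorem chambollePockPotential_self (B : Y →L[ℝ] Λ) (τ σ : ℝ) (q : Y) (μ : Λ) (x : Y)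
    (l : Λ) :
    chambollePockPotential B τ σ q μ x x l
      = 1 / (2 * τ) * ‖q - x‖ ^ 2 + 1 / (2 * σ) * ‖μ - l‖ ^ 2 := by
  simp [chambollePockPotential]

theorem lagrangian_sub_le_chambollePockPotential_sub [CompleteSpace Y] [CompleteSpace Λ]
    {B : Y →L[ℝ] Λ} {C : Set Y} {H : Y → ℝ} (hH : ConvexOn ℝ C H) {τ σ : ℝ} (hτ : 0 < τ)
    (hσ : 0 < σ) (hτσ : τ * σ * ‖B‖ ^ 2 ≤ 1) {x₀ x a q : Y} {l l' μ : Λ}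
    (hl' : l' = l + σ • B ((2 : ℝ) • x - x₀)) (ha : a ∈ C) (hq : q ∈ C)
    (hmin : IsMinOn (fun y => H y + 1 / (2 * τ) * ‖y - (x - τ • B.adjoint l')‖ ^ 2) C a) :
    lagrangian H B a μ - lagrangian H B q l'
      ≤ chambollePockPotential B τ σ q μ x₀ x l - chambollePockPotential B τ σ q μ x a l' := by
  have hprimal := hH.add_norm_sub_sq_le_of_isMinOn _ ha hq hmin
  rw [one_div_two_mul_mul_norm_sub_sub_adjoint_sq B hτ.ne',
    one_div_two_mul_mul_norm_sub_sub_adjoint_sq B hτ.ne'] at hprimal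
  have hdual : ⟪B ((2 : ℝ) • x - x₀), μ - l'⟫
      = 1 / (2 * σ) * (‖μ - l‖ ^ 2 - ‖l' - l‖ ^ 2 - ‖μ - l'‖ ^ 2) := by
    rw [← two_mul_inner_sub_sub_eq, hl', add_sub_cancel_left, real_inner_smul_left]
    field_simp
  have hsplit : ⟪B a, μ - l'⟫ = ⟪B ((2 : ℝ) • x - x₀), μ - l'⟫ + ⟪B (a - x), μ - l'⟫
      - ⟪B (x - x₀), μ - l⟫ + ⟪B (x - x₀), l' - l⟫ := by
    simp only [map_sub, map_smul, inner_sub_left, inner_sub_right, real_inner_smul_left]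
    ring
  have hcross := inner_apply_le_of_mul_mul_opNorm_sq_le_one B hτ hσ hτσ (x - x₀) (l' - l)
  unfold lagrangian chambollePockPotential
  rw [inner_sub_right] at hsplit
  linear_combination hprimal + hcross + hdual + hsplit

theorem lagrangian_sum_smul_sub_le {ι : Type*} {H : Y → ℝ} {D : Set Y} (hH : ConvexOn ℝ D H)
    (B : Y →L[ℝ] Λ) {s : Finset ι} {w : ι → ℝ} (hw₀ : ∀ i ∈ s, 0 ≤ w i)
    (hw₁ : ∑ i ∈ s, w i = 1) {x : ι → Y} (hx : ∀ i ∈ s, x i ∈ D) (l : ι → Λ) (q : Y) (μ : Λ) :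
    lagrangian H B (∑ i ∈ s, w i • x i) μ - lagrangian H B q (∑ i ∈ s, w i • l i)
      ≤ ∑ i ∈ s, w i * (lagrangian H B (x i) μ - lagrangian H B q (l i)) := by
  have hjensen := hH.map_sum_le hw₀ hw₁ hx
  have hconst : ∑ i ∈ s, w i * H q = H q := by rw [← Finset.sum_mul, hw₁, one_mul]
  simp only [lagrangian, map_sum, map_smul, sum_inner, inner_sum, real_inner_smul_left,
    real_inner_smul_right, smul_eq_mul, mul_sub, mul_add, Finset.sum_sub_distrib,
    Finset.sum_add_distrib, hconst] at hjensen ⊢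
  linarith

end PrimalDual

-- `p (0 - 1) = p 0`, so `p 0` also plays the role of `p₋₁`.
theorem chambolle_pock_ergodic_estimate_general
    {Y Λ : Type*} [NormedAddCommGroup Y] [InnerProductSpace ℝ Y] [FiniteDimensional ℝ Y]
    [NormedAddCommGroup Λ] [InnerProductSpace ℝ Λ] [FiniteDimensional ℝ Λ]
    (B : Y →L[ℝ] Λ) (C : Set Y)
    (hCconvex : Convex ℝ C)
    (H : Y → ℝ) (hHconvex : ConvexOn ℝ Set.univ H)
    (τ σ : ℝ) (hτ : 0 < τ) (hσ : 0 < σ) (hτσ : τ * σ * ‖B‖ ^ 2 < 1)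
    (p : ℕ → Y) (lam : ℕ → Λ)
    (hlam : ∀ n : ℕ, lam (n + 1) = lam n + σ • B ((2 : ℝ) • p n - p (n - 1)))
    (hpmem : ∀ n : ℕ, p (n + 1) ∈ C)
    (hpmin : ∀ n : ℕ, ∀ q ∈ C,
      H (p (n + 1)) + (1 / (2 * τ)) *
          ‖p (n + 1) - (p n - τ • (ContinuousLinearMap.adjoint B) (lam (n + 1)))‖ ^ 2 ≤
        H q + (1 / (2 * τ)) *
          ‖q - (p n - τ • (ContinuousLinearMap.adjoint B) (lam (n + 1)))‖ ^ 2) :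
    ∀ n : ℕ, 1 ≤ n → ∀ q ∈ C, ∀ mu : Λ,
      ((n : ℝ)⁻¹ • ∑ i ∈ Finset.range n, p (i + 1)) ∈ C ∧
      (H ((n : ℝ)⁻¹ • ∑ i ∈ Finset.range n, p (i + 1)) +
          (inner ℝ (B ((n : ℝ)⁻¹ • ∑ i ∈ Finset.range n, p (i + 1))) mu : ℝ)) -
        (H q + (inner ℝ (B q) ((n : ℝ)⁻¹ • ∑ i ∈ Finset.range n, lam (i + 1)) : ℝ)) ≤
      (1 / (n : ℝ)) * ((1 / τ) * ‖q - p 0‖ ^ 2 + (1 / σ) * ‖mu - lam 0‖ ^ 2) := by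
  intro n hn q hq mu
  have hn' : (0 : ℝ) < n := by exact_mod_cast hn
  have hw : ∑ _i ∈ Finset.range n, (n : ℝ)⁻¹ = 1 := by simp [hn'.ne']
  set Ψ : ℕ → ℝ := fun i => chambollePockPotential B τ σ q mu (p (i - 1)) (p i) (lam i)
  have hstep (i : ℕ) :
      lagrangian H B (p (i + 1)) mu - lagrangian H B q (lam (i + 1)) ≤ Ψ i - Ψ (i + 1) :=
    lagrangian_sub_le_chambollePockPotential_sub (hHconvex.subset (subset_univ C) hCconvex) hτ
      hσ hτσ.le (hlam i) (hpmem i) hq (isMinOn_iff.mpr (hpmin i))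
  simp only [Finset.smul_sum]
  refine ⟨hCconvex.sum_mem (fun _ _ => by positivity) hw (fun i _ => hpmem i), ?_⟩
  calc _ ≤ ∑ i ∈ Finset.range n,
        (n : ℝ)⁻¹ * (lagrangian H B (p (i + 1)) mu - lagrangian H B q (lam (i + 1))) :=
        lagrangian_sum_smul_sub_le hHconvex B (fun _ _ => by positivity) hw
          (fun _ _ => mem_univ _) _ q mu
    _ ≤ (n : ℝ)⁻¹ * (Ψ 0 - Ψ n) := by
      rw [← Finset.mul_sum, ← Finset.sum_range_sub']
      exact mul_le_mul_of_nonneg_left (Finset.sum_le_sum fun i _ => hstep i) (by positivity)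
    _ ≤ (n : ℝ)⁻¹ * Ψ 0 := by
      gcongr
      linarith [chambollePockPotential_nonneg B hτ hσ hτσ.le q mu (p (n - 1)) (p n) (lam n)]
    _ ≤ _ := by
      rw [one_div (n : ℝ),
        show Ψ 0 = _ from chambollePockPotential_self B τ σ q mu (p 0) (lam 0)]
      gcongr <;> linarith

/-- `O(1/n)` ergodic convergence estimate for the first-order primal-dual
(Chambolle–Pock) iteration applied to `min_{p ∈ C} max_λ { H(p) + ⟨B p, λ⟩ }`.
The sequence is indexed so that `p 0 = p₀` also plays the role of `p₋₁`
(note `0 - 1 = 0` in `ℕ`, encoding `p₋₁ = p₀`). -/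
theorem chambolle_pock_ergodic_estimate
    {Y Λ : Type*} [NormedAddCommGroup Y] [InnerProductSpace ℝ Y] [FiniteDimensional ℝ Y]
    [NormedAddCommGroup Λ] [InnerProductSpace ℝ Λ] [FiniteDimensional ℝ Λ]
    (B : Y →L[ℝ] Λ) (C : Set Y) (hCne : C.Nonempty) (hCclosed : IsClosed C)
    (hCconvex : Convex ℝ C)
    (H : Y → ℝ) (hHconvex : ConvexOn ℝ Set.univ H) (hHcont : Continuous H)
    (τ σ : ℝ) (hτ : 0 < τ) (hσ : 0 < σ) (hτσ : τ * σ * ‖B‖ ^ 2 < 1)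
    (p : ℕ → Y) (lam : ℕ → Λ) (hp0 : p 0 ∈ C)
    (hlam : ∀ n : ℕ, lam (n + 1) = lam n + σ • B ((2 : ℝ) • p n - p (n - 1)))
    (hpmem : ∀ n : ℕ, p (n + 1) ∈ C)
    (hpmin : ∀ n : ℕ, ∀ q ∈ C,
      H (p (n + 1)) + (1 / (2 * τ)) *
          ‖p (n + 1) - (p n - τ • (ContinuousLinearMap.adjoint B) (lam (n + 1)))‖ ^ 2 ≤
        H q + (1 / (2 * τ)) *
          ‖q - (p n - τ • (ContinuousLinearMap.adjoint B) (lam (n + 1)))‖ ^ 2) :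
    ∀ n : ℕ, 1 ≤ n → ∀ q ∈ C, ∀ mu : Λ,
      ((n : ℝ)⁻¹ • ∑ i ∈ Finset.range n, p (i + 1)) ∈ C ∧
      (H ((n : ℝ)⁻¹ • ∑ i ∈ Finset.range n, p (i + 1)) +
          (inner ℝ (B ((n : ℝ)⁻¹ • ∑ i ∈ Finset.range n, p (i + 1))) mu : ℝ)) -
        (H q + (inner ℝ (B q) ((n : ℝ)⁻¹ • ∑ i ∈ Finset.range n, lam (i + 1)) : ℝ)) ≤
      (1 / (n : ℝ)) * ((1 / τ) * ‖q - p 0‖ ^ 2 + (1 / σ) * ‖mu - lam 0‖ ^ 2) :=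
  chambolle_pock_ergodic_estimate_general B C hCconvex H hHconvex τ σ hτ hσ hτσ p lam hlam hpmem
    hpmin
end

section
/- Let Ỹ and Λ be finite-dimensional real inner product spaces, B : Ỹ → Λ a continuous linear map, C ⊆ Ỹ a nonempty closed convex set, and H : Ỹ → ℝ a convex continuous function. Let τ, σ > 0 satisfy τ σ ‖B‖² < 1. Define L(p, λ) = H(p) + ⟨B p, λ⟩ for p ∈ C, λ ∈ Λ, and generate sequences by p₋₁ = p₀ ∈ C, λ₀ ∈ Λ, λ_{n+1} = λ_n + σ B(2 p_n − p_{n−1}), and p_{n+1} the minimizer over C of q ↦ H(q) + (1/(2τ)) ‖q − (p_n − τ B^* λ_{n+1})‖². Assume there exists a saddle point (p̂, λ̂) ∈ C × Λ, i.e., L(p̂, λ) ≤ L(p̂, λ̂) ≤ L(p, λ̂) for all p ∈ C and λ ∈ Λ. Then the sequence (p_n, λ_n) converges to some saddle point (p*, λ*) of L. -/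
/-!
Put `κ = √(τσ) ‖B‖ < 1` and `d n = p n - p (n-1)`. For a saddle point `(p̂, λ̂)`, the variational
inequality of the proximal step, the dual update and Young's inequality show that the energy
`E n = ‖p n - p̂‖²/(2τ) + ‖λ n - λ̂‖²/(2σ) + ⟪B d n, λ n - λ̂⟫ + κ ‖d n‖²/(2τ)`
decreases at each step by at least `1 - κ` times the weighted squared step, and is at least
`1 - κ` times the weighted squared distance to `(p̂, λ̂)`. So the steps are square-summable and the
iterates bounded. The optimality conditions pass to the limit along a convergent subsequence, so
its limit `(p*, λ*)` is again a saddle point; the energy relative to `(p*, λ*)` is nonincreasing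
and tends to `0` along the subsequence, hence along the whole sequence.
-/

open Filter Topology Set
open scoped RealInnerProductSpace

lemma nonneg_of_forall_nonneg_add_mul {a b : ℝ} (h : ∀ t : ℝ, 0 < t → t ≤ 1 → 0 ≤ a + t * b) :
    0 ≤ a := by
  by_contra! ha
  have h1 := h 1 one_pos le_rfl
  have hb : 0 < b := by linarith
  have ht := h (-a / (2 * b)) (div_pos (by linarith) (by linarith))
    ((div_le_one (by linarith)).2 (by linarith))
  have : -a / (2 * b) * b = -a / 2 := by field_simp
  linarith

lemma summable_of_add_le_of_nonneg {u v : ℕ → ℝ} (hu : ∀ n, 0 ≤ u n) (hv : ∀ n, 0 ≤ v n)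
    (h : ∀ n, u (n + 1) + v n ≤ u n) : Summable v := by
  have hsum : ∀ n, ∑ i ∈ Finset.range n, v i + u n ≤ u 0 := by
    intro n
    induction n with
    | zero => simp
    | succ n ih => rw [Finset.sum_range_succ]; linarith [h n]
  exact summable_of_sum_range_le hv fun n => by linarith [hsum n, hu n]

lemma Antitone.tendsto_of_tendsto_comp {u : ℕ → ℝ} (hu : Antitone u) (hbdd : BddBelow (range u))
    {φ : ℕ → ℕ} (hφ : Tendsto φ atTop atTop) {a : ℝ} (h : Tendsto (u ∘ φ) atTop (𝓝 a)) :
    Tendsto u atTop (𝓝 a) := by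
  have hinf := tendsto_atTop_ciInf hu hbdd
  rwa [tendsto_nhds_unique (hinf.comp hφ) h] at hinf

section ChambollePock

variable {Y Λ : Type*} [NormedAddCommGroup Y] [NormedAddCommGroup Λ]

noncomputable def weightedNormSq (τ σ : ℝ) (y : Y) (w : Λ) : ℝ :=
  ‖y‖ ^ 2 / (2 * τ) + ‖w‖ ^ 2 / (2 * σ)

lemma weightedNormSq_nonneg {τ σ : ℝ} (hτ : 0 < τ) (hσ : 0 < σ) (y : Y) (w : Λ) :
    0 ≤ weightedNormSq τ σ y w := by
  unfold weightedNormSq; positivity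

lemma norm_le_sqrt_of_weightedNormSq_le {τ σ M : ℝ} (hτ : 0 < τ) (hσ : 0 < σ) {y : Y} {w : Λ}
    (h : weightedNormSq τ σ y w ≤ M) : ‖y‖ ≤ √(2 * τ * M) ∧ ‖w‖ ≤ √(2 * σ * M) := by
  unfold weightedNormSq at h
  have hy : ‖y‖ ^ 2 / (2 * τ) ≤ M := (le_add_of_nonneg_right (by positivity)).trans h
  have hw : ‖w‖ ^ 2 / (2 * σ) ≤ M := (le_add_of_nonneg_left (by positivity)).trans h
  rw [div_le_iff₀' (by positivity)] at hy hw
  exact ⟨Real.le_sqrt_of_sq_le hy, Real.le_sqrt_of_sq_le hw⟩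

lemma tendsto_zero_of_weightedNormSq_tendsto_zero {α : Type*} {l : Filter α} {τ σ : ℝ}
    (hτ : 0 < τ) (hσ : 0 < σ) {y : α → Y} {w : α → Λ}
    (h : Tendsto (fun i => weightedNormSq τ σ (y i) (w i)) l (𝓝 0)) :
    Tendsto y l (𝓝 0) ∧ Tendsto w l (𝓝 0) := by
  have hb i := norm_le_sqrt_of_weightedNormSq_le hτ hσ (le_refl (weightedNormSq τ σ (y i) (w i)))
  constructor
  · refine squeeze_zero_norm (fun i => (hb i).1) ?_
    simpa using (h.const_mul (2 * τ)).sqrt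
  · refine squeeze_zero_norm (fun i => (hb i).2) ?_
    simpa using (h.const_mul (2 * σ)).sqrt

variable [InnerProductSpace ℝ Y] [InnerProductSpace ℝ Λ]

lemma two_mul_real_inner_sub_sub (a b c : Y) :
    2 * ⟪a - b, c - b⟫ = ‖b - c‖ ^ 2 + ‖b - a‖ ^ 2 - ‖a - c‖ ^ 2 := by
  rw [show a - c = (a - b) - (c - b) by abel, norm_sub_sq_real (a - b) (c - b), norm_sub_rev b c,
    norm_sub_rev b a]
  ring

lemma real_inner_sub_le_of_isMinOn_add_normSq {C : Set Y} {H : Y → ℝ} (hH : ConvexOn ℝ C H)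
    {τ : ℝ} (hτ : 0 < τ) {c x q : Y} (hx : x ∈ C) (hq : q ∈ C)
    (hmin : IsMinOn (fun y => H y + 1 / (2 * τ) * ‖y - c‖ ^ 2) C x) :
    ⟪c - x, q - x⟫ ≤ τ * (H q - H x) := by
  suffices 0 ≤ τ * (H q - H x) - ⟪c - x, q - x⟫ by linarith
  refine nonneg_of_forall_nonneg_add_mul (b := ‖q - x‖ ^ 2 / 2) fun t ht0 ht1 => ?_
  have hconv : H ((1 - t) • x + t • q) ≤ (1 - t) * H x + t * H q :=
    hH.2 hx hq (by linarith) ht0.le (by ring)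
  have hmem : (1 - t) • x + t • q ∈ C := hH.1 hx hq (by linarith) ht0.le (by ring)
  have hle := isMinOn_iff.1 hmin _ hmem
  have hexp : ‖(1 - t) • x + t • q - c‖ ^ 2
      = ‖x - c‖ ^ 2 - 2 * t * ⟪c - x, q - x⟫ + t ^ 2 * ‖q - x‖ ^ 2 := by
    rw [show (1 - t) • x + t • q - c = (x - c) + t • (q - x) by module, norm_add_sq_real,
      real_inner_smul_right, norm_smul, Real.norm_of_nonneg ht0.le, ← neg_sub c x, inner_neg_left]
    ring
  simp only [hexp] at hle
  have : 0 ≤ t * (τ * (H q - H x) - ⟪c - x, q - x⟫ + t * (‖q - x‖ ^ 2 / 2)) := by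
    field_simp at hle
    nlinarith
  exact nonneg_of_mul_nonneg_right (by linarith) ht0

-- Cauchy–Schwarz, then Young's inequality `ab ≤ √(τσ) (a²/(2τ) + b²/(2σ))`.
lemma real_inner_le_mul_weightedNormSq (B : Y →L[ℝ] Λ) {τ σ : ℝ} (hτ : 0 < τ) (hσ : 0 < σ)
    (y : Y) (w : Λ) : ⟪B y, w⟫ ≤ √(τ * σ) * ‖B‖ * weightedNormSq τ σ y w := by
  have hamgm : ‖y‖ * ‖w‖ ≤ √(τ * σ) * weightedNormSq τ σ y w := by
    have hτ' := Real.sq_sqrt hτ.le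
    have hσ' := Real.sq_sqrt hσ.le
    have key : 2 * (√τ * √σ) * (‖y‖ * ‖w‖) ≤ σ * ‖y‖ ^ 2 + τ * ‖w‖ ^ 2 := by
      nlinarith [sq_nonneg (√σ * ‖y‖ - √τ * ‖w‖)]
    unfold weightedNormSq
    rw [Real.sqrt_mul hτ.le, div_add_div _ _ (by positivity) (by positivity), mul_div_assoc',
      le_div_iff₀ (by positivity)]
    have hs2 : (√τ * √σ) ^ 2 = τ * σ := by rw [mul_pow, hτ', hσ']
    linear_combination 2 * mul_le_mul_of_nonneg_left key (by positivity : 0 ≤ √τ * √σ)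
      - 4 * (‖y‖ * ‖w‖) * hs2
  calc ⟪B y, w⟫ ≤ ‖B y‖ * ‖w‖ := real_inner_le_norm _ _
    _ ≤ ‖B‖ * ‖y‖ * ‖w‖ := by gcongr; exact B.le_opNorm y
    _ ≤ √(τ * σ) * ‖B‖ * weightedNormSq τ σ y w := by
      rw [mul_assoc, mul_comm √(τ * σ), mul_assoc]; gcongr

def IsLagrangianSaddle (B : Y →L[ℝ] Λ) (C : Set Y) (H : Y → ℝ) (ph : Y) (lh : Λ) : Prop :=
  ∀ q ∈ C, ∀ mu : Λ,
    H ph + ⟪B ph, mu⟫ ≤ H ph + ⟪B ph, lh⟫ ∧ H ph + ⟪B ph, lh⟫ ≤ H q + ⟪B q, lh⟫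

lemma isLagrangianSaddle_iff {B : Y →L[ℝ] Λ} {C : Set Y} {H : Y → ℝ} {ph : Y} {lh : Λ}
    (hph : ph ∈ C) :
    IsLagrangianSaddle B C H ph lh ↔ B ph = 0 ∧ ∀ q ∈ C, H ph ≤ H q + ⟪B q, lh⟫ := by
  constructor
  · intro h
    have hB : B ph = 0 := by
      have h' := (h ph hph (lh + B ph)).1
      rw [inner_add_right] at h'
      exact real_inner_self_nonpos.1 (by linarith)
    exact ⟨hB, fun q hq => by simpa [hB] using (h q hq lh).2⟩
  · rintro ⟨hB, h⟩ q hq mu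
    simpa [hB] using h q hq

noncomputable def cpEnergy (B : Y →L[ℝ] Λ) (τ σ : ℝ) (p : ℕ → Y) (lam : ℕ → Λ) (ph : Y) (lh : Λ)
    (n : ℕ) : ℝ :=
  weightedNormSq τ σ (p n - ph) (lam n - lh) + ⟪B (p n - p (n - 1)), lam n - lh⟫
    + √(τ * σ) * ‖B‖ * (‖p n - p (n - 1)‖ ^ 2 / (2 * τ))

lemma mul_weightedNormSq_le_cpEnergy (B : Y →L[ℝ] Λ) {τ σ : ℝ} (hτ : 0 < τ) (hσ : 0 < σ)
    (p : ℕ → Y) (lam : ℕ → Λ) (ph : Y) (lh : Λ) (n : ℕ) :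
    (1 - √(τ * σ) * ‖B‖) * weightedNormSq τ σ (p n - ph) (lam n - lh)
      ≤ cpEnergy B τ σ p lam ph lh n := by
  have hYoung := real_inner_le_mul_weightedNormSq B hτ hσ (p n - p (n - 1)) (lh - lam n)
  rw [← neg_sub (lam n) lh, inner_neg_right] at hYoung
  have hκ : 0 ≤ √(τ * σ) * ‖B‖ := by positivity
  unfold cpEnergy weightedNormSq at *
  rw [norm_neg] at hYoung
  nlinarith [mul_nonneg hκ (by positivity : 0 ≤ ‖p n - ph‖ ^ 2 / (2 * τ))]

lemma cpEnergy_nonneg {B : Y →L[ℝ] Λ} {τ σ : ℝ} (hτ : 0 < τ) (hσ : 0 < σ)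
    (hκ : √(τ * σ) * ‖B‖ < 1) (p : ℕ → Y) (lam : ℕ → Λ) (ph : Y) (lh : Λ) (n : ℕ) :
    0 ≤ cpEnergy B τ σ p lam ph lh n :=
  (mul_nonneg (by linarith) (weightedNormSq_nonneg hτ hσ _ _)).trans
    (mul_weightedNormSq_le_cpEnergy B hτ hσ p lam ph lh n)

variable [CompleteSpace Y] [CompleteSpace Λ]

structure IsChambollePockSeq (B : Y →L[ℝ] Λ) (C : Set Y) (H : Y → ℝ) (τ σ : ℝ) (p : ℕ → Y)
    (lam : ℕ → Λ) : Prop where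
  -- At `n = 0` the extrapolation uses `p (0 - 1) = p 0`, i.e. `p₋₁ = p₀`.
  dual_step (n : ℕ) : lam (n + 1) = lam n + σ • B ((2 : ℝ) • p n - p (n - 1))
  primal_mem (n : ℕ) : p (n + 1) ∈ C
  primal_isMinOn (n : ℕ) :
    IsMinOn (fun q => H q + 1 / (2 * τ) *
      ‖q - (p n - τ • (ContinuousLinearMap.adjoint B) (lam (n + 1)))‖ ^ 2) C (p (n + 1))

namespace IsChambollePockSeq

variable {B : Y →L[ℝ] Λ} {C : Set Y} {H : Y → ℝ} {τ σ : ℝ} {p : ℕ → Y} {lam : ℕ → Λ}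
  {ph : Y} {lh : Λ}

lemma primal_inequality (hCP : IsChambollePockSeq B C H τ σ p lam) (hH : ConvexOn ℝ C H)
    (hτ : 0 < τ) (n : ℕ) {q : Y} (hq : q ∈ C) :
    ⟪p n - p (n + 1), q - p (n + 1)⟫
      ≤ τ * (H q - H (p (n + 1)) + ⟪B (q - p (n + 1)), lam (n + 1)⟫) := by
  have h := real_inner_sub_le_of_isMinOn_add_normSq hH hτ (hCP.primal_mem n) hq
    (hCP.primal_isMinOn n)
  rw [sub_right_comm, inner_sub_left, real_inner_smul_left,
    ContinuousLinearMap.adjoint_inner_left, real_inner_comm (B _)] at h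
  linarith

lemma weightedNormSq_succ_add_le (hCP : IsChambollePockSeq B C H τ σ p lam)
    (hH : ConvexOn ℝ C H) (hτ : 0 < τ) (hσ : 0 < σ) (hsad : IsLagrangianSaddle B C H ph lh) (hph : ph ∈ C) (n : ℕ) :
    weightedNormSq τ σ (p (n + 1) - ph) (lam (n + 1) - lh)
        + weightedNormSq τ σ (p (n + 1) - p n) (lam (n + 1) - lam n)
      ≤ weightedNormSq τ σ (p n - ph) (lam n - lh)
        - ⟪B ((p (n + 1) - p n) - (p n - p (n - 1))), lam (n + 1) - lh⟫ := by
  obtain ⟨hBph, hph_le⟩ := (isLagrangianSaddle_iff hph).1 hsad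
  have hprimal : ⟪p n - p (n + 1), ph - p (n + 1)⟫ ≤ τ * -⟪B (p (n + 1)), lam (n + 1) - lh⟫ := by
    have h := hCP.primal_inequality hH hτ n hph
    rw [map_sub, hBph, zero_sub, inner_neg_left] at h
    rw [inner_sub_right (B _)]
    linarith [mul_le_mul_of_nonneg_left (hph_le _ (hCP.primal_mem n)) hτ.le]
  have hdual : ⟪lam n - lam (n + 1), lh - lam (n + 1)⟫
      = σ * ⟪B ((2 : ℝ) • p n - p (n - 1)), lam (n + 1) - lh⟫ := by
    rw [hCP.dual_step n, sub_add_cancel_left, ← neg_sub (lam n + _), inner_neg_left,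
      inner_neg_right, real_inner_smul_left]
    ring
  have hB : B ((p (n + 1) - p n) - (p n - p (n - 1)))
      = B (p (n + 1)) - B ((2 : ℝ) • p n - p (n - 1)) := by
    rw [← map_sub]; congr 1; module
  have hP := two_mul_real_inner_sub_sub (p n) (p (n + 1)) ph
  have hD := two_mul_real_inner_sub_sub (lam n) (lam (n + 1)) lh
  have hP' : (‖p (n + 1) - ph‖ ^ 2 + ‖p (n + 1) - p n‖ ^ 2 - ‖p n - ph‖ ^ 2) / (2 * τ)
      ≤ -⟪B (p (n + 1)), lam (n + 1) - lh⟫ := by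
    rw [div_le_iff₀ (by positivity)]; linarith
  have hD' : (‖lam (n + 1) - lh‖ ^ 2 + ‖lam (n + 1) - lam n‖ ^ 2 - ‖lam n - lh‖ ^ 2) / (2 * σ)
      = ⟪B ((2 : ℝ) • p n - p (n - 1)), lam (n + 1) - lh⟫ := by
    rw [div_eq_iff (by positivity)]; linarith
  rw [sub_div, add_div] at hP' hD'
  rw [hB, inner_sub_left]
  unfold weightedNormSq
  linarith

lemma cpEnergy_succ_add_le (hCP : IsChambollePockSeq B C H τ σ p lam) (hH : ConvexOn ℝ C H)
    (hτ : 0 < τ) (hσ : 0 < σ) (hsad : IsLagrangianSaddle B C H ph lh) (hph : ph ∈ C) (n : ℕ) :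
    cpEnergy B τ σ p lam ph lh (n + 1)
        + (1 - √(τ * σ) * ‖B‖) * weightedNormSq τ σ (p (n + 1) - p n) (lam (n + 1) - lam n)
      ≤ cpEnergy B τ σ p lam ph lh n := by
  have hstep := hCP.weightedNormSq_succ_add_le hH hτ hσ hsad hph n
  have hYoung := real_inner_le_mul_weightedNormSq B hτ hσ (p n - p (n - 1)) (lam (n + 1) - lam n)
  have hsplit : ⟪B ((p (n + 1) - p n) - (p n - p (n - 1))), lam (n + 1) - lh⟫
      = ⟪B (p (n + 1) - p n), lam (n + 1) - lh⟫ - ⟪B (p n - p (n - 1)), lam n - lh⟫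
        - ⟪B (p n - p (n - 1)), lam (n + 1) - lam n⟫ := by
    have h : ⟪B (p n - p (n - 1)), lam (n + 1) - lh⟫
        = ⟪B (p n - p (n - 1)), lam n - lh⟫ + ⟪B (p n - p (n - 1)), lam (n + 1) - lam n⟫ := by
      rw [← inner_add_right, sub_add_sub_cancel']
    rw [map_sub, inner_sub_left, h]
    ring
  rw [hsplit] at hstep
  unfold cpEnergy
  simp only [Nat.add_sub_cancel]
  unfold weightedNormSq at *
  linarith

lemma antitone_cpEnergy (hCP : IsChambollePockSeq B C H τ σ p lam) (hH : ConvexOn ℝ C H)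
    (hτ : 0 < τ) (hσ : 0 < σ) (hκ : √(τ * σ) * ‖B‖ < 1) (hsad : IsLagrangianSaddle B C H ph lh)
    (hph : ph ∈ C) : Antitone (cpEnergy B τ σ p lam ph lh) :=
  antitone_nat_of_succ_le fun n =>
    (le_add_of_nonneg_right
      (mul_nonneg (sub_nonneg.2 hκ.le) (weightedNormSq_nonneg hτ hσ _ _))).trans
      (hCP.cpEnergy_succ_add_le hH hτ hσ hsad hph n)

lemma tendsto_succ_sub_zero (hCP : IsChambollePockSeq B C H τ σ p lam) (hH : ConvexOn ℝ C H)
    (hτ : 0 < τ) (hσ : 0 < σ) (hκ : √(τ * σ) * ‖B‖ < 1) (hsad : IsLagrangianSaddle B C H ph lh)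
    (hph : ph ∈ C) :
    Tendsto (fun n => p (n + 1) - p n) atTop (𝓝 0)
      ∧ Tendsto (fun n => lam (n + 1) - lam n) atTop (𝓝 0) := by
  refine tendsto_zero_of_weightedNormSq_tendsto_zero hτ hσ (Summable.tendsto_atTop_zero ?_)
  refine (summable_mul_left_iff (sub_pos.2 hκ).ne').1 (summable_of_add_le_of_nonneg
    (cpEnergy_nonneg hτ hσ hκ p lam ph lh) (fun n => ?_)
    (hCP.cpEnergy_succ_add_le hH hτ hσ hsad hph))
  exact mul_nonneg (sub_nonneg.2 hκ.le) (weightedNormSq_nonneg hτ hσ _ _)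

lemma exists_subseq_tendsto [FiniteDimensional ℝ Y] [FiniteDimensional ℝ Λ]
    (hCP : IsChambollePockSeq B C H τ σ p lam) (hH : ConvexOn ℝ C H)
    (hτ : 0 < τ) (hσ : 0 < σ) (hκ : √(τ * σ) * ‖B‖ < 1) (hsad : IsLagrangianSaddle B C H ph lh)
    (hph : ph ∈ C) :
    ∃ (ps : Y) (ls : Λ) (φ : ℕ → ℕ), StrictMono φ ∧ Tendsto (fun j => p (φ j)) atTop (𝓝 ps)
      ∧ Tendsto (fun j => lam (φ j)) atTop (𝓝 ls) := by
  set M := cpEnergy B τ σ p lam ph lh 0 / (1 - √(τ * σ) * ‖B‖)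
  have hbound (n : ℕ) : weightedNormSq τ σ (p n - ph) (lam n - lh) ≤ M := by
    rw [le_div_iff₀ (sub_pos.2 hκ), mul_comm]
    exact (mul_weightedNormSq_le_cpEnergy B hτ hσ p lam ph lh n).trans
      (hCP.antitone_cpEnergy hH hτ hσ hκ hsad hph n.zero_le)
  have hmem (n : ℕ) : (p n, lam n)
      ∈ Metric.closedBall ph √(2 * τ * M) ×ˢ Metric.closedBall lh √(2 * σ * M) := by
    obtain ⟨hp, hl⟩ := norm_le_sqrt_of_weightedNormSq_le hτ hσ (hbound n)
    rw [← dist_eq_norm] at hp hl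
    exact ⟨hp, hl⟩
  obtain ⟨z, -, φ, hφ, hlim⟩ :=
    tendsto_subseq_of_bounded (Metric.isBounded_closedBall.prod Metric.isBounded_closedBall) hmem
  exact ⟨z.1, z.2, φ, hφ, hlim.fst_nhds, hlim.snd_nhds⟩

lemma isLagrangianSaddle_of_tendsto (hCP : IsChambollePockSeq B C H τ σ p lam)
    (hH : ConvexOn ℝ C H) (hHc : Continuous H) (hC : IsClosed C) (hτ : 0 < τ) (hσ : 0 < σ)
    (hdl : Tendsto (fun n => lam (n + 1) - lam n) atTop (𝓝 0))
    {φ : ℕ → ℕ} (hφ : Tendsto φ atTop atTop) {ps : Y} {ls : Λ}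
    (hp : Tendsto (fun j => p (φ j)) atTop (𝓝 ps))
    (hp1 : Tendsto (fun j => p (φ j + 1)) atTop (𝓝 ps))
    (hl1 : Tendsto (fun j => lam (φ j + 1)) atTop (𝓝 ls)) :
    ps ∈ C ∧ IsLagrangianSaddle B C H ps ls := by
  have hps : ps ∈ C := hC.mem_of_tendsto hp1 (Eventually.of_forall fun j => hCP.primal_mem (φ j))
  have hBps : B ps = 0 := by
    -- the dual steps `σ B (2 p (φ j + 1) - p (φ j))` tend both to `0` and to `σ B ps`
    have h0 : Tendsto (fun j => σ • B ((2 : ℝ) • p (φ j + 1) - p (φ j))) atTop (𝓝 0) := by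
      have := hdl.comp ((tendsto_add_atTop_nat 1).comp hφ)
      simpa [Function.comp_def, hCP.dual_step] using this
    have h1 : Tendsto (fun j => σ • B ((2 : ℝ) • p (φ j + 1) - p (φ j))) atTop
        (𝓝 (σ • B ((2 : ℝ) • ps - ps))) :=
      (((B.continuous.tendsto _).comp ((hp1.const_smul (2 : ℝ)).sub hp))).const_smul σ
    have := tendsto_nhds_unique h1 h0
    rwa [two_smul, add_sub_cancel_right, smul_eq_zero, or_iff_right hσ.ne'] at this
  refine ⟨hps, (isLagrangianSaddle_iff hps).2 ⟨hBps, fun q hq => ?_⟩⟩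
  have hL : Tendsto (fun j => ⟪p (φ j) - p (φ j + 1), q - p (φ j + 1)⟫) atTop
      (𝓝 ⟪ps - ps, q - ps⟫) :=
    (hp.sub hp1).inner (tendsto_const_nhds.sub hp1)
  have hR : Tendsto (fun j => τ * (H q - H (p (φ j + 1)) + ⟪B (q - p (φ j + 1)), lam (φ j + 1)⟫))
      atTop (𝓝 (τ * (H q - H ps + ⟪B (q - ps), ls⟫))) :=
    tendsto_const_nhds.mul ((tendsto_const_nhds.sub ((hHc.tendsto ps).comp hp1)).add
      (((B.continuous.tendsto _).comp (tendsto_const_nhds.sub hp1)).inner hl1))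
  have hlim := le_of_tendsto_of_tendsto' hL hR fun j => hCP.primal_inequality hH hτ (φ j) hq
  rw [sub_self, inner_zero_left, map_sub, hBps, sub_zero] at hlim
  linarith [(mul_nonneg_iff_of_pos_left hτ).1 hlim]

lemma tendsto_of_isLagrangianSaddle (hCP : IsChambollePockSeq B C H τ σ p lam)
    (hH : ConvexOn ℝ C H) (hτ : 0 < τ) (hσ : 0 < σ) (hκ : √(τ * σ) * ‖B‖ < 1) {ps : Y} {ls : Λ}
    (hsad : IsLagrangianSaddle B C H ps ls) (hps : ps ∈ C)
    (hdp : Tendsto (fun n => p (n + 1) - p n) atTop (𝓝 0)) {φ : ℕ → ℕ} (hφ : Tendsto φ atTop atTop)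
    (hp1 : Tendsto (fun j => p (φ j + 1)) atTop (𝓝 ps))
    (hl1 : Tendsto (fun j => lam (φ j + 1)) atTop (𝓝 ls)) :
    Tendsto (fun n => (p n, lam n)) atTop (𝓝 (ps, ls)) := by
  have hE1 : Tendsto (fun j => cpEnergy B τ σ p lam ps ls (φ j + 1)) atTop (𝓝 0) := by
    have hcont : Continuous fun z : Y × Λ × Y => weightedNormSq τ σ (z.1 - ps) (z.2.1 - ls)
        + ⟪B z.2.2, z.2.1 - ls⟫ + √(τ * σ) * ‖B‖ * (‖z.2.2‖ ^ 2 / (2 * τ)) := by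
      unfold weightedNormSq; fun_prop
    convert (hcont.tendsto (ps, ls, 0)).comp (hp1.prodMk_nhds (hl1.prodMk_nhds (hdp.comp hφ)))
      using 2
    · rfl
    · simp [weightedNormSq]
  have hE : Tendsto (cpEnergy B τ σ p lam ps ls) atTop (𝓝 0) :=
    (hCP.antitone_cpEnergy hH hτ hσ hκ hsad hps).tendsto_of_tendsto_comp
      ⟨0, by rintro _ ⟨n, rfl⟩; exact cpEnergy_nonneg hτ hσ hκ p lam ps ls n⟩
      ((tendsto_add_atTop_nat 1).comp hφ) hE1
  have hW : Tendsto (fun n => weightedNormSq τ σ (p n - ps) (lam n - ls)) atTop (𝓝 0) := by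
    refine squeeze_zero (fun n => weightedNormSq_nonneg hτ hσ _ _) (fun n => ?_)
      (by simpa using hE.div_const (1 - √(τ * σ) * ‖B‖))
    rw [le_div_iff₀ (sub_pos.2 hκ), mul_comm]
    exact mul_weightedNormSq_le_cpEnergy B hτ hσ p lam ps ls n
  obtain ⟨hp, hl⟩ := tendsto_zero_of_weightedNormSq_tendsto_zero hτ hσ hW
  exact (tendsto_sub_nhds_zero_iff.1 hp).prodMk_nhds (tendsto_sub_nhds_zero_iff.1 hl)

end IsChambollePockSeq

end ChambollePock

theorem chambolle_pock_iterates_converge_general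
    {Y Λ : Type*} [NormedAddCommGroup Y] [InnerProductSpace ℝ Y] [FiniteDimensional ℝ Y]
    [NormedAddCommGroup Λ] [InnerProductSpace ℝ Λ] [FiniteDimensional ℝ Λ]
    (B : Y →L[ℝ] Λ) (C : Set Y) (hCclosed : IsClosed C)
    (hCconvex : Convex ℝ C)
    (H : Y → ℝ) (hHconvex : ConvexOn ℝ Set.univ H) (hHcont : Continuous H)
    (τ σ : ℝ) (hτ : 0 < τ) (hσ : 0 < σ) (hτσ : τ * σ * ‖B‖ ^ 2 < 1)
    (p : ℕ → Y) (lam : ℕ → Λ)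
    (hlam : ∀ n : ℕ, lam (n + 1) = lam n + σ • B ((2 : ℝ) • p n - p (n - 1)))
    (hpmem : ∀ n : ℕ, p (n + 1) ∈ C)
    (hpmin : ∀ n : ℕ, ∀ q ∈ C,
      H (p (n + 1)) + (1 / (2 * τ)) *
          ‖p (n + 1) - (p n - τ • (ContinuousLinearMap.adjoint B) (lam (n + 1)))‖ ^ 2 ≤
        H q + (1 / (2 * τ)) *
          ‖q - (p n - τ • (ContinuousLinearMap.adjoint B) (lam (n + 1)))‖ ^ 2)
    (phat : Y) (lamhat : Λ) (hphat : phat ∈ C)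
    (hsaddle : ∀ q ∈ C, ∀ mu : Λ,
      H phat + (inner ℝ (B phat) mu : ℝ) ≤ H phat + (inner ℝ (B phat) lamhat : ℝ) ∧
      H phat + (inner ℝ (B phat) lamhat : ℝ) ≤ H q + (inner ℝ (B q) lamhat : ℝ)) :
    ∃ (pstar : Y) (lamstar : Λ), pstar ∈ C ∧
      (∀ q ∈ C, ∀ mu : Λ,
        H pstar + (inner ℝ (B pstar) mu : ℝ) ≤ H pstar + (inner ℝ (B pstar) lamstar : ℝ) ∧
        H pstar + (inner ℝ (B pstar) lamstar : ℝ) ≤ H q + (inner ℝ (B q) lamstar : ℝ)) ∧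
      Filter.Tendsto (fun n => (p n, lam n)) Filter.atTop (nhds (pstar, lamstar)) := by
  have hκ : √(τ * σ) * ‖B‖ < 1 := by
    rw [← pow_lt_one_iff_of_nonneg (by positivity) two_ne_zero, mul_pow,
      Real.sq_sqrt (by positivity)]
    exact hτσ
  have hH : ConvexOn ℝ C H := hHconvex.subset (subset_univ C) hCconvex
  have hCP : IsChambollePockSeq B C H τ σ p lam := ⟨hlam, hpmem, fun n => isMinOn_iff.2 (hpmin n)⟩
  obtain ⟨hdp, hdl⟩ := hCP.tendsto_succ_sub_zero hH hτ hσ hκ hsaddle hphat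
  obtain ⟨ps, ls, φ, hφ, hp, hl⟩ := hCP.exists_subseq_tendsto hH hτ hσ hκ hsaddle hphat
  have hφ' := hφ.tendsto_atTop
  have hp1 : Tendsto (fun j => p (φ j + 1)) atTop (𝓝 ps) := by
    simpa using hp.add (hdp.comp hφ')
  have hl1 : Tendsto (fun j => lam (φ j + 1)) atTop (𝓝 ls) := by
    simpa using hl.add (hdl.comp hφ')
  obtain ⟨hps, hsad⟩ :=
    hCP.isLagrangianSaddle_of_tendsto hH hHcont hCclosed hτ hσ hdl hφ' hp hp1 hl1
  exact ⟨ps, ls, hps, hsad, hCP.tendsto_of_isLagrangianSaddle hH hτ hσ hκ hsad hps hdp hφ' hp1 hl1⟩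

/-- convergence of the iterates of the first-order primal-dual
(Chambolle–Pock) algorithm applied to `min_{p ∈ C} max_λ { H(p) + ⟨B p, λ⟩ }`,
assuming a saddle point exists. The sequence is indexed so that `p 0 = p₀` also
plays the role of `p₋₁` (note `0 - 1 = 0` in `ℕ`, encoding `p₋₁ = p₀`). -/
theorem chambolle_pock_iterates_converge
    {Y Λ : Type*} [NormedAddCommGroup Y] [InnerProductSpace ℝ Y] [FiniteDimensional ℝ Y]
    [NormedAddCommGroup Λ] [InnerProductSpace ℝ Λ] [FiniteDimensional ℝ Λ]
    (B : Y →L[ℝ] Λ) (C : Set Y) (hCne : C.Nonempty) (hCclosed : IsClosed C)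
    (hCconvex : Convex ℝ C)
    (H : Y → ℝ) (hHconvex : ConvexOn ℝ Set.univ H) (hHcont : Continuous H)
    (τ σ : ℝ) (hτ : 0 < τ) (hσ : 0 < σ) (hτσ : τ * σ * ‖B‖ ^ 2 < 1)
    (p : ℕ → Y) (lam : ℕ → Λ) (hp0 : p 0 ∈ C)
    (hlam : ∀ n : ℕ, lam (n + 1) = lam n + σ • B ((2 : ℝ) • p n - p (n - 1)))
    (hpmem : ∀ n : ℕ, p (n + 1) ∈ C)
    (hpmin : ∀ n : ℕ, ∀ q ∈ C,
      H (p (n + 1)) + (1 / (2 * τ)) *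
          ‖p (n + 1) - (p n - τ • (ContinuousLinearMap.adjoint B) (lam (n + 1)))‖ ^ 2 ≤
        H q + (1 / (2 * τ)) *
          ‖q - (p n - τ • (ContinuousLinearMap.adjoint B) (lam (n + 1)))‖ ^ 2)
    (phat : Y) (lamhat : Λ) (hphat : phat ∈ C)
    (hsaddle : ∀ q ∈ C, ∀ mu : Λ,
      H phat + (inner ℝ (B phat) mu : ℝ) ≤ H phat + (inner ℝ (B phat) lamhat : ℝ) ∧
      H phat + (inner ℝ (B phat) lamhat : ℝ) ≤ H q + (inner ℝ (B q) lamhat : ℝ)) :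
    ∃ (pstar : Y) (lamstar : Λ), pstar ∈ C ∧
      (∀ q ∈ C, ∀ mu : Λ,
        H pstar + (inner ℝ (B pstar) mu : ℝ) ≤ H pstar + (inner ℝ (B pstar) lamstar : ℝ) ∧
        H pstar + (inner ℝ (B pstar) lamstar : ℝ) ≤ H q + (inner ℝ (B q) lamstar : ℝ)) ∧
      Filter.Tendsto (fun n => (p n, lam n)) Filter.atTop (nhds (pstar, lamstar)) :=
  chambolle_pock_iterates_converge_general B C hCclosed hCconvex H hHconvex hHcont τ σ hτ hσ hτσ p
    lam hlam hpmem hpmin phat lamhat hphat hsaddle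
end

section
/- Let X and Y be finite-dimensional real normed spaces, A : X → Y an injective continuous linear map, and α > 0. Let F : X → EReal be a function that never takes the value −∞, is finite at some point u₀ ∈ X, and is bounded below by a real constant. For each n ∈ ℕ let G_n : Y → ℝ be a function, and assume: (a) there exists Ḡ : Y → ℝ with G_n(q) ≤ Ḡ(q) for all n and all q ∈ Y; (b) the family {G_n} is equi-coercive, i.e., for every t ∈ ℝ there is a compact set K_t ⊆ Y with {q ∈ Y : G_n(q) ≤ t} ⊆ K_t for all n. If for each n the point u_n ∈ X minimizes u ↦ α F(u) + G_n(A u) over X, then the sequence (u_n) is bounded: there exists M ≥ 0 with ‖u_n‖ ≤ M for all n. -/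
/-- boundedness of the primal iterates: if `u_n` minimizes
`u ↦ αF(u) + G_n(A u)` where `A` is injective linear, `F` is proper, never `−∞`,
bounded below, and the family `{G_n}` is uniformly bounded above and equi-coercive,
then the sequence `(u_n)` is bounded. -/
theorem primal_iterates_bounded
    {X Y : Type*} [NormedAddCommGroup X] [NormedSpace ℝ X] [FiniteDimensional ℝ X]
    [NormedAddCommGroup Y] [NormedSpace ℝ Y] [FiniteDimensional ℝ Y]
    (A : X →L[ℝ] Y) (hA : Function.Injective A)
    (α : ℝ) (hα : 0 < α)
    (F : X → EReal) (hFbot : ∀ u, F u ≠ ⊥)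
    (u₀ : X) (hFu₀ : F u₀ ≠ ⊤)
    (c : ℝ) (hFlb : ∀ u, (c : EReal) ≤ F u)
    (G : ℕ → Y → ℝ) (Gbar : Y → ℝ) (hGub : ∀ (n : ℕ) (q : Y), G n q ≤ Gbar q)
    (hGequi : ∀ t : ℝ, ∃ K : Set Y, IsCompact K ∧ ∀ n : ℕ, {q : Y | G n q ≤ t} ⊆ K)
    (u : ℕ → X)
    (humin : ∀ (n : ℕ) (v : X),
      (α : EReal) * F (u n) + ((G n (A (u n)) : ℝ) : EReal) ≤
        (α : EReal) * F v + ((G n (A v) : ℝ) : EReal)) :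
    ∃ M : ℝ, 0 ≤ M ∧ ∀ n : ℕ, ‖u n‖ ≤ M := by
  set r : ℝ := (F u₀).toReal with hr
  have hFu₀' : F u₀ = (r : EReal) := (EReal.coe_toReal hFu₀ (hFbot u₀)).symm
  set t : ℝ := α * r + Gbar (A u₀) - α * c with ht
  -- bound on G n (A (u n))
  have hkey : ∀ n : ℕ, G n (A (u n)) ≤ t := by
    intro n
    have h1 := humin n u₀
    rw [hFu₀'] at h1
    have hrhs : ((α : EReal) * (r : EReal) + ((G n (A u₀) : ℝ) : EReal))
        = ((α * r + G n (A u₀) : ℝ) : EReal) := by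
      rw [← EReal.coe_mul, ← EReal.coe_add]
    rw [hrhs] at h1
    -- F (u n) ≠ ⊤
    have hne : F (u n) ≠ ⊤ := by
      intro htop
      rw [htop, EReal.coe_mul_top_of_pos hα] at h1
      have : ((α * r + G n (A u₀) : ℝ) : EReal) < ⊤ := EReal.coe_lt_top _
      rw [EReal.top_add_of_ne_bot (by exact_mod_cast EReal.coe_ne_bot _)] at h1
      exact absurd h1 (not_le.mpr this)
    set s : ℝ := (F (u n)).toReal with hs
    have hFn : F (u n) = (s : EReal) := (EReal.coe_toReal hne (hFbot (u n))).symm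
    rw [hFn, ← EReal.coe_mul, ← EReal.coe_add] at h1
    have h1' : α * s + G n (A (u n)) ≤ α * r + G n (A u₀) := by exact_mod_cast h1
    have hcs : c ≤ s := by
      have := hFlb (u n); rw [hFn] at this; exact_mod_cast this
    have h2 : G n (A u₀) ≤ Gbar (A u₀) := hGub n (A u₀)
    nlinarith
  obtain ⟨K, hKcomp, hKsub⟩ := hGequi t
  obtain ⟨R, hR⟩ := hKcomp.isBounded.exists_norm_le
  obtain ⟨C, hCpos, hC⟩ := (A : X →ₗ[ℝ] Y).exists_antilipschitzWith
    (LinearMap.ker_eq_bot.mpr hA)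
  refine ⟨max 0 (C * R), le_max_left _ _, fun n => le_trans ?_ (le_max_right _ _)⟩
  have hAn : A (u n) ∈ K := hKsub n (hkey n)
  have h1 : ‖u n‖ ≤ C * ‖A (u n)‖ := by
    have := hC.le_mul_dist (u n) 0
    simpa [dist_eq_norm] using this
  calc ‖u n‖ ≤ C * ‖A (u n)‖ := h1
    _ ≤ C * R := by
        exact mul_le_mul_of_nonneg_left (hR _ hAn) (le_of_lt (by exact_mod_cast hCpos))
end

section
/- Let ι be a finite type, σ > 0, and f, u ∈ EuclideanSpace ℝ ι. Define v* componentwise by v*ᵢ = fᵢ + max(|uᵢ − fᵢ| − σ, 0) · (uᵢ − fᵢ)/|uᵢ − fᵢ| (with the convention 0/|0| = 0). Then v* is the unique minimizer over EuclideanSpace ℝ ι of v ↦ ‖v − f‖₁ + (1/(2σ)) ‖v − u‖²; that is, prox_{σ ‖·−f‖₁}(u) = f + shrink(u − f, σ). -/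
private lemma shrink_scalar (σ : ℝ) (hσ : 0 < σ) (a t : ℝ) :
    2 * σ * |max (|a| - σ) 0 * (a / |a|)| + (max (|a| - σ) 0 * (a / |a|) - a) ^ 2
      + (t - max (|a| - σ) 0 * (a / |a|)) ^ 2 ≤ 2 * σ * |t| + (t - a) ^ 2 := by
  rcases le_or_gt |a| σ with h | h
  · have hmax : max (|a| - σ) 0 = 0 := max_eq_right (by linarith)
    rw [hmax]
    simp only [zero_mul, abs_zero, zero_sub, sub_zero, mul_zero]
    have h1 : t * a ≤ |t| * |a| := by rw [← abs_mul]; exact le_abs_self _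
    have h2 : |t| * |a| ≤ |t| * σ := mul_le_mul_of_nonneg_left h (abs_nonneg t)
    nlinarith [abs_nonneg t]
  · have ha : a ≠ 0 := fun h0 => by simp [h0, abs_zero] at h; linarith
    have habs' : σ < |a| := h
    rcases lt_or_gt_of_ne ha with hneg | hpos
    · have habs : |a| = -a := abs_of_neg hneg
      have hdiv : a / |a| = -1 := by rw [habs]; field_simp
      have hmax : max (|a| - σ) 0 = -a - σ := by
        rw [habs]; exact max_eq_left (by rw [habs] at habs'; linarith)
      rw [hdiv, hmax]
      have hs : |(-a - σ) * (-1 : ℝ)| = -a - σ := by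
        rw [habs] at habs'
        rw [abs_of_nonpos (by nlinarith)]; ring
      rw [hs]
      nlinarith [neg_abs_le t]
    · have habs : |a| = a := abs_of_pos hpos
      have hdiv : a / |a| = 1 := by rw [habs]; field_simp
      have hmax : max (|a| - σ) 0 = a - σ := by
        rw [habs]; exact max_eq_left (by rw [habs] at habs'; linarith)
      rw [hdiv, hmax]
      have hs : |(a - σ) * (1 : ℝ)| = a - σ := by
        rw [habs] at habs'
        rw [abs_of_nonneg (by nlinarith)]; ring
      rw [hs]
      nlinarith [le_abs_self t]

/-- the proximity operator of the `ℓ¹` fidelity `v ↦ ‖v − f‖₁` is the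
shifted soft-thresholding: `prox_{σ‖·−f‖₁}(u) = f + shrink(u − f, σ)`, i.e. the point
`v*` with `v*ᵢ = fᵢ + max(|uᵢ − fᵢ| − σ, 0) (uᵢ − fᵢ)/|uᵢ − fᵢ|` (with `0/|0| = 0`,
which is Lean's division convention) is the unique minimizer of
`v ↦ ‖v − f‖₁ + ‖v − u‖²/(2σ)`. -/
theorem prox_l1_is_shrinkage {ι : Type*} [Fintype ι] (σ : ℝ) (hσ : 0 < σ)
    (f u vstar : EuclideanSpace ℝ ι)
    (hv : ∀ i, vstar i = f i + max (|u i - f i| - σ) 0 * ((u i - f i) / |u i - f i|)) :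
    (∀ v : EuclideanSpace ℝ ι,
      (∑ i, |vstar i - f i|) + (1 / (2 * σ)) * ‖vstar - u‖ ^ 2 ≤
        (∑ i, |v i - f i|) + (1 / (2 * σ)) * ‖v - u‖ ^ 2) ∧
    (∀ v : EuclideanSpace ℝ ι,
      (∑ i, |v i - f i|) + (1 / (2 * σ)) * ‖v - u‖ ^ 2 ≤
        (∑ i, |vstar i - f i|) + (1 / (2 * σ)) * ‖vstar - u‖ ^ 2 → v = vstar) := by
  have hσ2 : (2 * σ : ℝ) ≠ 0 := by positivity
  have normsq : ∀ x : EuclideanSpace ℝ ι, ‖x‖ ^ 2 = ∑ i, (x i) ^ 2 := by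
    intro x
    rw [EuclideanSpace.norm_eq, Real.sq_sqrt (by positivity)]
    simp [Real.norm_eq_abs, sq_abs]
  have master : ∀ v : EuclideanSpace ℝ ι,
      (∑ i, |vstar i - f i|) + (1 / (2 * σ)) * ‖vstar - u‖ ^ 2
        + (1 / (2 * σ)) * ‖v - vstar‖ ^ 2 ≤
      (∑ i, |v i - f i|) + (1 / (2 * σ)) * ‖v - u‖ ^ 2 := by
    intro v
    simp only [normsq, PiLp.sub_apply, Finset.mul_sum, ← Finset.sum_add_distrib]
    apply Finset.sum_le_sum
    intro i _
    set a := u i - f i with ha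
    set s := max (|a| - σ) 0 * (a / |a|) with hs
    have hsc := shrink_scalar σ hσ a (v i - f i)
    have e1 : vstar i - f i = s := by rw [hv i]; ring
    have e2 : vstar i - u i = s - a := by rw [hv i, ha]; ring
    have e3 : v i - vstar i = (v i - f i) - s := by rw [hv i]; ring
    rw [e1, e2, e3]
    have h' : (2 * σ * |s| + (s - a) ^ 2 + ((v i - f i) - s) ^ 2) / (2 * σ) ≤
        (2 * σ * |v i - f i| + (v i - f i - a) ^ 2) / (2 * σ) := by
      gcongr
    refine le_trans (le_of_eq ?_) (h'.trans (le_of_eq ?_)) <;> field_simp <;> ring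
  constructor
  · intro v
    have := master v
    have hn : 0 ≤ (1 / (2 * σ)) * ‖v - vstar‖ ^ 2 := by positivity
    linarith
  · intro v hle
    have hm := master v
    have hpos : (0 : ℝ) < 1 / (2 * σ) := by positivity
    have hz : ‖v - vstar‖ ^ 2 ≤ 0 := by nlinarith
    have h0 : ‖v - vstar‖ = 0 := by nlinarith [norm_nonneg (v - vstar)]
    exact sub_eq_zero.mp (norm_eq_zero.mp h0)
end
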